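/- arXiv:2012.05039 — 6 statements merged into one kernel-verified Lean document; each statement's English description precedes it below -/
import Mathlib

section
/- Let r ≥ 1 and let the signed permutation group act on ℝ^r (maps Fin r → ℝ) as follows: a permutation σ of {1,…,r} acts by (σ·x)_i = x_{σ⁻¹(i)}, and for each index j the sign change s_j acts by (s_j·x)_i = x_i for i ≠ j and (s_j·x)_j = −x_j. Let U ⊆ ℝ^r be a set invariant under all coordinate permutations and all sign changes, and let Φ = (h_1,…,h_r) : U → ℝ^r. Then Φ is equivariant for every coordinate permutation and every sign change (i.e. Φ(σ·x) = σ·Φ(x) and Φ(s_j·x) = s_j·Φ(x) for all σ, j, x ∈ U) if and only if there exists a single function h : U → ℝ such that: (i) h_i(x) = h(p_{1i}(x)) for every i, where p_{1i} is the transposition of coordinates 1 and i; (ii) h(s_1·x) = −h(x) for all x ∈ U (h is odd in the first variable); (iii) h(s_i·x) = h(x) for every i > 1 and all x ∈ U, and h(p_{ij}(x)) = h(x) for all i, j > 1 and all x ∈ U. -/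
/-!
Equivariance under the transposition `p_{1i}` gives `Φ_i = Φ_1 ∘ p_{1i}`, so `Φ` is determined by
`h = Φ_1`, and the behaviour of `h` under the stabiliser of the first coordinate (generated by `s_1`
and the `s_i`, `p_{ij}` with `i, j > 1`) is exactly conditions (ii) and (iii). Conversely, the
`i`-th component of `Φ (σ x) = σ Φ(x)` is the invariance of `h` under `p_{1i} σ p_{1σ⁻¹(i)}`, which
fixes the first coordinate, and `p_{1i} s_j = s_{p_{1i}(j)} p_{1i}` reduces sign equivariance to
(ii) and (iii).
-/

/-- Permutation action on `ℝ^r`: `(σ · x) i = x (σ⁻¹ i)`. -/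
def permAct {r : ℕ} (σ : Equiv.Perm (Fin r)) (x : Fin r → ℝ) : Fin r → ℝ :=
  fun i => x (σ⁻¹ i)

/-- Sign change in the `j`-th coordinate: `(s_j · x) i = x i` for `i ≠ j`,
`(s_j · x) j = -x j`. -/
def signAct {r : ℕ} (j : Fin r) (x : Fin r → ℝ) : Fin r → ℝ :=
  fun i => if i = j then -x i else x i

open Equiv

section Actions

variable {r : ℕ}

lemma permAct_apply (σ : Perm (Fin r)) (x : Fin r → ℝ) (i : Fin r) :
    permAct σ x i = x (σ⁻¹ i) :=
  rfl

lemma permAct_one (x : Fin r → ℝ) : permAct 1 x = x :=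
  rfl

lemma permAct_mul (σ τ : Perm (Fin r)) (x : Fin r → ℝ) :
    permAct (σ * τ) x = permAct σ (permAct τ x) :=
  rfl

lemma permAct_swap_apply_left (i j : Fin r) (x : Fin r → ℝ) :
    permAct (swap i j) x i = x j := by
  simp [permAct_apply]

lemma permAct_swap_apply_of_ne_of_ne {i j k : Fin r} (hi : k ≠ i) (hj : k ≠ j)
    (x : Fin r → ℝ) : permAct (swap i j) x k = x k := by
  simp [permAct_apply, swap_apply_of_ne_of_ne hi hj]

lemma signAct_apply_self (j : Fin r) (x : Fin r → ℝ) : signAct j x j = -x j :=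
  if_pos rfl

lemma signAct_apply_of_ne {i j : Fin r} (h : i ≠ j) (x : Fin r → ℝ) : signAct j x i = x i :=
  if_neg h

lemma permAct_signAct (σ : Perm (Fin r)) (j : Fin r) (x : Fin r → ℝ) :
    permAct σ (signAct j x) = signAct (σ j) (permAct σ x) := by
  funext i
  simp only [permAct_apply, signAct, Perm.inv_eq_iff_eq]

end Actions

section Stabilizer

variable {r : ℕ} {β : Type*} {U : Set (Fin r → ℝ)} {z : Fin r} {f : (Fin r → ℝ) → β}

/-- The stabiliser of `z` is generated by the transpositions of indices other than `z`. -/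
lemma apply_permAct_eq_of_swap_invariant
    (hU : ∀ σ : Perm (Fin r), ∀ x ∈ U, permAct σ x ∈ U)
    (hf : ∀ i j : Fin r, i ≠ z → j ≠ z → ∀ x ∈ U, f (permAct (swap i j) x) = f x)
    {π : Perm (Fin r)} (hπ : π z = z) {x : Fin r → ℝ} (hx : x ∈ U) :
    f (permAct π x) = f x := by
  have hmem : ∀ a, π a ≠ z ↔ a ≠ z := fun a => π.injective.ne_iff' hπ
  have hsupp : ∀ a, π a ≠ a → a ≠ z := fun a ha haz => ha (haz ▸ hπ)
  rw [← Perm.ofSubtype_subtypePerm (p := (· ≠ z)) hmem hsupp]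
  induction π.subtypePerm (p := (· ≠ z)) hmem using Perm.swap_induction_on generalizing x with
  | one => rw [map_one, permAct_one]
  | swap_mul g a b _ ih =>
    rw [map_mul, permAct_mul, Perm.ofSubtype_swap_eq, hf _ _ a.2 b.2 _ (hU _ x hx), ih hx]

end Stabilizer

section Equivariance

variable {r : ℕ} {U : Set (Fin r → ℝ)} {Φ : (Fin r → ℝ) → (Fin r → ℝ)} {h : (Fin r → ℝ) → ℝ}
  {z : Fin r}

lemma permAct_equivariant_of_swap_invariant
    (hU : ∀ σ : Perm (Fin r), ∀ x ∈ U, permAct σ x ∈ U)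
    (hΦ : ∀ x ∈ U, ∀ i, Φ x i = h (permAct (swap z i) x))
    (hh : ∀ i j : Fin r, i ≠ z → j ≠ z → ∀ x ∈ U, h (permAct (swap i j) x) = h x)
    (σ : Perm (Fin r)) {x : Fin r → ℝ} (hx : x ∈ U) :
    Φ (permAct σ x) = permAct σ (Φ x) := by
  funext i
  set a := σ⁻¹ i
  have hfix : (swap z i * σ * swap z a) z = z := by simp [a]
  calc Φ (permAct σ x) i
      = h (permAct (swap z i * σ * swap z a) (permAct (swap z a) x)) := by
        rw [hΦ _ (hU σ x hx), ← permAct_mul, ← permAct_mul, mul_assoc, swap_mul_self, mul_one]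
    _ = h (permAct (swap z a) x) :=
        apply_permAct_eq_of_swap_invariant hU hh hfix (hU _ x hx)
    _ = permAct σ (Φ x) i := (hΦ x hx a).symm

lemma signAct_equivariant_of_odd_even
    (hUperm : ∀ σ : Perm (Fin r), ∀ x ∈ U, permAct σ x ∈ U)
    (hUsign : ∀ j : Fin r, ∀ x ∈ U, signAct j x ∈ U)
    (hΦ : ∀ x ∈ U, ∀ i, Φ x i = h (permAct (swap z i) x))
    (hodd : ∀ x ∈ U, h (signAct z x) = -h x)
    (heven : ∀ i : Fin r, i ≠ z → ∀ x ∈ U, h (signAct i x) = h x)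
    (j : Fin r) {x : Fin r → ℝ} (hx : x ∈ U) :
    Φ (signAct j x) = signAct j (Φ x) := by
  funext i
  rw [hΦ _ (hUsign j x hx), permAct_signAct]
  by_cases hij : i = j
  · subst hij
    rw [swap_apply_right, hodd _ (hUperm _ x hx), signAct_apply_self, hΦ x hx]
  · have hne : swap z i j ≠ z := by
      rw [Ne, swap_apply_eq_iff, swap_apply_left]
      exact Ne.symm hij
    rw [heven _ hne _ (hUperm _ x hx), signAct_apply_of_ne hij, hΦ x hx]

end Equivariance

/-- A map `Φ = (h_1, …, h_r) : U → ℝ^r` on a signed-permutation invariant set `U ⊆ ℝ^r`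
is equivariant for all coordinate permutations and sign changes iff there is a single
function `h` such that `h_i = h ∘ p_{1i}`, `h` is odd in the first variable, even in the
other variables and symmetric in the variables beyond the first.  (The first coordinate
is indexed by `⟨0, hr⟩`.) -/
theorem signed_perm_equivariance_iff (r : ℕ) (hr : 0 < r) (U : Set (Fin r → ℝ))
    (hUperm : ∀ σ : Equiv.Perm (Fin r), ∀ x ∈ U, permAct σ x ∈ U)
    (hUsign : ∀ j : Fin r, ∀ x ∈ U, signAct j x ∈ U)
    (Φ : (Fin r → ℝ) → (Fin r → ℝ)) :
    ((∀ σ : Equiv.Perm (Fin r), ∀ x ∈ U, Φ (permAct σ x) = permAct σ (Φ x)) ∧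
      (∀ j : Fin r, ∀ x ∈ U, Φ (signAct j x) = signAct j (Φ x)))
    ↔ ∃ h : (Fin r → ℝ) → ℝ,
        (∀ x ∈ U, ∀ i : Fin r, Φ x i = h (permAct (Equiv.swap ⟨0, hr⟩ i) x)) ∧
        (∀ x ∈ U, h (signAct ⟨0, hr⟩ x) = -h x) ∧
        (∀ i : Fin r, i ≠ ⟨0, hr⟩ → ∀ x ∈ U, h (signAct i x) = h x) ∧
        (∀ i j : Fin r, i ≠ ⟨0, hr⟩ → j ≠ ⟨0, hr⟩ → ∀ x ∈ U,
          h (permAct (Equiv.swap i j) x) = h x) := by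
  set z : Fin r := ⟨0, hr⟩
  constructor
  · rintro ⟨hperm, hsign⟩
    refine ⟨fun x => Φ x z, fun x hx i => ?_, fun x hx => ?_, fun i hi x hx => ?_,
      fun i j hi hj x hx => ?_⟩
    · dsimp only
      rw [hperm _ x hx, permAct_swap_apply_left]
    · dsimp only
      rw [hsign z x hx, signAct_apply_self]
    · dsimp only
      rw [hsign i x hx, signAct_apply_of_ne (Ne.symm hi)]
    · dsimp only
      rw [hperm _ x hx, permAct_swap_apply_of_ne_of_ne (Ne.symm hi) (Ne.symm hj)]
  · rintro ⟨h, hΦ, hodd, heven, hswap⟩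
    exact ⟨fun σ x hx => permAct_equivariant_of_swap_invariant hUperm hΦ hswap σ hx,
      fun j x hx => signAct_equivariant_of_odd_even hUperm hUsign hΦ hodd heven j hx⟩
end

section
/- Let r ≥ 1 and let g = ∏_{i=1}^r sl(2,ℝ) be the product real Lie algebra of r copies of the Lie algebra of traceless real 2×2 matrices, with componentwise bracket. For each i, let H_i ∈ g be the element whose i-th component is the matrix ((0,1),(1,0)) and whose other components are 0, and let Y_i ∈ g be the element whose i-th component is ((1,0),(0,−1)) and whose other components are 0. Let 𝔞 ⊆ g be the real span of H_1,…,H_r, and for V = Σ_i c_i H_i ∈ 𝔞 write JV := Σ_i c_i Y_i. Let 𝔞' ⊆ 𝔞 be a linear subspace and set W = 𝔞' + J(𝔞') (the span of 𝔞' and J(𝔞')). Then W is a Lie triple system of g, i.e. ⁅⁅u,v⁆,w⁆ ∈ W for all u, v, w ∈ W, if and only if 𝔞' is spanned by vectors V_1,…,V_k of the form V_m = Σ_{i ∈ S_m} ε_{m,i} H_i, where each ε_{m,i} ∈ {1,−1} and the index sets S_m ⊆ {1,…,r} are nonempty and pairwise disjoint. -/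
/-- `g = ∏_{i=1}^r sl(2,ℝ)`, modeled as `r`-tuples of real `2 × 2` matrices with the
componentwise commutator bracket (all elements occurring below are traceless in each
component). -/
abbrev slProd (r : ℕ) := Fin r → Matrix (Fin 2) (Fin 2) ℝ

/-- `H_i`: the tuple whose `i`-th component is `((0,1),(1,0))` and whose other
components are `0`. -/
def Hvec (r : ℕ) (i : Fin r) : slProd r :=
  Pi.single i !![(0 : ℝ), 1; 1, 0]

/-- `Y_i`: the tuple whose `i`-th component is `((1,0),(0,-1))` and whose other
components are `0`. -/
def Yvec (r : ℕ) (i : Fin r) : slProd r :=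
  Pi.single i !![(1 : ℝ), 0; 0, -1]

/-- The `ℝ`-linear map `J` with `J (H_i) = Y_i` (componentwise right multiplication by
`((0,-1),(1,0))`); on `𝔞 = span {H_1, …, H_r}` it sends `Σ c_i H_i` to `Σ c_i Y_i`. -/
noncomputable def Jmap (r : ℕ) : slProd r →ₗ[ℝ] slProd r :=
  LinearMap.pi fun i =>
    (LinearMap.mulRight ℝ !![(0 : ℝ), -1; 1, 0]).comp (LinearMap.proj i)

/-!
Write `𝔞' = {Σ aᵢ Hᵢ | a ∈ A}` for a subspace `A ⊆ ℝʳ`. Computing in each `sl(2,ℝ)` factor,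
the double bracket of `Σ aᵢHᵢ + Σ bᵢYᵢ`, `Σ cᵢHᵢ + Σ dᵢYᵢ`, `Σ eᵢHᵢ + Σ fᵢYᵢ` is
`4 Σ (aᵢdᵢ - bᵢcᵢ) fᵢ Hᵢ - 4 Σ (aᵢdᵢ - bᵢcᵢ) eᵢ Yᵢ`, so `𝔞' + J𝔞'` is a Lie triple system
iff `A` is closed under the pointwise triple product `(a, b, c) ↦ abc`.

Such an `A` contains `a · p(a²)` for every `a ∈ A` and every polynomial `p`; interpolating on
the values of `a²` produces a nonzero tripotent `u` (`u³ = u`, i.e. entries in `{0, ±1}`)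
supported inside the support of `a`. A tripotent of minimal support spans `u²A`, the part of
`A` living on its support, so `A = ℝu ⊕ {b ∈ A | u²b = 0}`, and induction on the dimension
gives pairwise orthogonal tripotents spanning `A`. Conversely, the span of pairwise orthogonal
tripotents is closed under triple products.
-/

open Submodule Function

namespace Submodule

variable {R A : Type*} [CommSemiring R] [CommSemiring A] [Algebra R A]

theorem mul_mul_le_iff {M N K P : Submodule R A} :
    M * N * K ≤ P ↔ ∀ m ∈ M, ∀ n ∈ N, ∀ k ∈ K, m * n * k ∈ P := by
  rw [← le_div_iff_mul_le, mul_le]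
  simp only [mem_div_iff_forall_mul_mem]

theorem span_mul_span_mul_span_le_of_pairwise_mul_eq_zero {κ : Type*} {v : κ → A}
    (hv3 : ∀ m, v m * v m * v m = v m) (hvv : Pairwise fun m n => v m * v n = 0) :
    span R (Set.range v) * span R (Set.range v) * span R (Set.range v) ≤ span R (Set.range v) := by
  rw [span_mul_span, span_mul_span, span_le]
  rintro _ ⟨_, ⟨_, ⟨m, rfl⟩, _, ⟨n, rfl⟩, rfl⟩, _, ⟨p, rfl⟩, rfl⟩
  by_cases hmn : m = n
  · subst hmn
    by_cases hmp : m = p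
    · subst hmp
      show v m * v m * v m ∈ _
      exact (hv3 m).symm ▸ subset_span ⟨m, rfl⟩
    · simp [mul_assoc, hvv hmp]
  · simp [hvv hmn]

end Submodule

section TripleClosed

variable {ι : Type*} [Fintype ι] {A : Submodule ℝ (ι → ℝ)}

omit [Fintype ι] in
theorem mul_prod_sq_sub_mem (hA : A * A * A ≤ A) {a : ι → ℝ} (ha : a ∈ A) (s : Finset ℝ) :
    (fun l => a l * ∏ t ∈ s, (a l ^ 2 - t)) ∈ A := by
  classical
  induction s using Finset.induction with
  | empty => simpa using ha
  | insert t s ht ih =>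
    set x : ι → ℝ := fun l => a l * ∏ t ∈ s, (a l ^ 2 - t)
    have h : (fun l => a l * ∏ t ∈ insert t s, (a l ^ 2 - t)) = a * a * x - t • x := by
      funext l
      simp only [Finset.prod_insert ht, Pi.sub_apply, Pi.mul_apply, Pi.smul_apply, smul_eq_mul]
      ring
    rw [h]
    exact A.sub_mem (hA (mul_mem_mul (mul_mem_mul ha ha) ih)) (A.smul_mem t ih)

theorem exists_tripotent_mem_of_apply_ne_zero (hA : A * A * A ≤ A) {a : ι → ℝ} (ha : a ∈ A)
    {i : ι} (hi : a i ≠ 0) :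
    ∃ u ∈ A, u * u * u = u ∧ u i ≠ 0 ∧ support u ⊆ support a := by
  classical
  set s := (Finset.univ.image fun l => a l ^ 2).erase (a i ^ 2)
  set p : ℝ → ℝ := fun x => ∏ t ∈ s, (x - t)
  have hpi : p (a i ^ 2) ≠ 0 :=
    Finset.prod_ne_zero_iff.2 fun t ht => sub_ne_zero.2 (Finset.ne_of_mem_erase ht).symm
  have hp : ∀ l, a l ^ 2 ≠ a i ^ 2 → p (a l ^ 2) = 0 := fun l hl =>
    Finset.prod_eq_zero (Finset.mem_erase.2 ⟨hl, Finset.mem_image_of_mem _ (Finset.mem_univ l)⟩)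
      (sub_self _)
  set u : ι → ℝ := (a i * p (a i ^ 2))⁻¹ • fun l => a l * p (a l ^ 2)
  have hu : ∀ l, u l = (a i * p (a i ^ 2))⁻¹ * (a l * p (a l ^ 2)) := fun l => rfl
  refine ⟨u, A.smul_mem _ (mul_prod_sq_sub_mem hA ha s), ?_, by simp [hu, hpi, hi], ?_⟩
  · funext l
    simp only [Pi.mul_apply]
    by_cases hl : a l ^ 2 = a i ^ 2
    · have hul : u l = a l / a i := by rw [hu, hl]; field_simp
      have hsq : u l * u l = 1 := by
        rw [hul, div_mul_div_comm, ← sq, ← sq, hl, div_self (pow_ne_zero 2 hi)]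
      rw [hsq, one_mul]
    · rw [hu, hp l hl]; ring
  · intro l hl
    simp only [mem_support, hu] at hl ⊢
    exact left_ne_zero_of_mul (right_ne_zero_of_mul hl)

theorem exists_tripotent_mul_self_mul_mem_span (hA : A * A * A ≤ A) {a : ι → ℝ} (ha : a ∈ A)
    (ha0 : a ≠ 0) : ∃ u ∈ A, u * u * u = u ∧ u ≠ 0 ∧ ∀ b ∈ A, u * u * b ∈ ℝ ∙ u := by
  induction hn : (support a).ncard using Nat.strong_induction_on generalizing a with
  | _ n ih =>
  obtain ⟨i, hi⟩ := Function.ne_iff.1 ha0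
  obtain ⟨u, huA, hu3, hui, husupp⟩ := exists_tripotent_mem_of_apply_ne_zero hA ha hi
  by_cases hproj : ∀ b ∈ A, u * u * b ∈ ℝ ∙ u
  · exact ⟨u, huA, hu3, fun h => hui (by simp [h]), hproj⟩
  push Not at hproj
  obtain ⟨b, hbA, hb⟩ := hproj
  set x := u * u * b - (b i * u i) • u with hx
  have hxA : x ∈ A := A.sub_mem (hA (mul_mem_mul (mul_mem_mul huA huA) hbA)) (A.smul_mem _ huA)
  have hx0 : x ≠ 0 := fun h => hb (mem_span_singleton.2 ⟨b i * u i, (sub_eq_zero.1 h).symm⟩)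
  have hxu : support x ⊆ support u := fun l hl => by
    contrapose! hl
    simp [hx, notMem_support.1 hl]
  have hxi : x i = 0 := by
    simp only [hx, Pi.sub_apply, Pi.mul_apply, Pi.smul_apply, smul_eq_mul]
    ring
  have hxsupp : support x ⊂ support a :=
    (Set.ssubset_iff_of_subset (hxu.trans husupp)).2 ⟨i, hi, fun h => h hxi⟩
  exact ih _ (hn ▸ Set.ncard_lt_ncard hxsupp) hxA hx0 rfl

theorem exists_orthogonal_tripotents_span_eq (hA : A * A * A ≤ A) :
    ∃ (k : ℕ) (v : Fin k → ι → ℝ), (∀ m, v m ≠ 0) ∧ (∀ m, v m * v m * v m = v m) ∧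
      Pairwise (fun m n => v m * v n = 0) ∧ span ℝ (Set.range v) = A := by
  induction hn : Module.finrank ℝ A using Nat.strong_induction_on generalizing A with
  | _ n ih =>
  rcases eq_or_ne A ⊥ with rfl | hne
  · exact ⟨0, Fin.elim0, fun m => m.elim0, fun m => m.elim0, fun m => m.elim0, by simp⟩
  obtain ⟨a, ha, ha0⟩ := exists_mem_ne_zero_of_ne_bot hne
  obtain ⟨u, huA, hu3, hu0, hproj⟩ := exists_tripotent_mul_self_mul_mem_span hA ha ha0
  set A' := A ⊓ LinearMap.ker (LinearMap.mulLeft ℝ (u * u))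
  have hmemA' : ∀ b, b ∈ A' ↔ b ∈ A ∧ u * u * b = 0 := fun b => Iff.rfl
  have hA' : A' * A' * A' ≤ A' := mul_mul_le_iff.2 fun b hb c hc d hd =>
    (hmemA' _).2 ⟨hA (mul_mem_mul (mul_mem_mul hb.1 hc.1) hd.1), by
      rw [← mul_assoc, ← mul_assoc, ((hmemA' b).1 hb).2, zero_mul, zero_mul]⟩
  have hlt : A' < A := lt_of_le_of_ne inf_le_left fun h => hu0 <| by
    simpa [hu3] using ((hmemA' u).1 (h ▸ huA)).2
  obtain ⟨k, v, hv0, hv3, hvv, hspan⟩ := ih _ (hn ▸ finrank_lt_finrank_of_lt hlt) hA' rfl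
  have huv : ∀ m, u * v m = 0 := fun m => by
    have hvA' : v m ∈ A' := hspan ▸ subset_span ⟨m, rfl⟩
    linear_combination u * ((hmemA' _).1 hvA').2 - v m * hu3
  refine ⟨k + 1, Fin.cons u v, Fin.cases hu0 hv0, Fin.cases hu3 hv3, ?_, ?_⟩
  · intro m n hmn
    cases m using Fin.cases <;> cases n using Fin.cases
    · exact absurd rfl hmn
    · exact huv _
    · simpa [mul_comm] using huv _
    · exact hvv (fun h => hmn (congrArg Fin.succ h))
  · rw [Fin.range_cons, span_insert, hspan]
    refine le_antisymm (sup_le ((span_singleton_le_iff_mem _ _).2 huA) inf_le_left) fun b hb => ?_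
    have hb' : b - u * u * b ∈ A' := (hmemA' _).2
      ⟨A.sub_mem hb (hA (mul_mem_mul (mul_mem_mul huA huA) hb)),
        by linear_combination (-(u * b)) * hu3⟩
    exact mem_sup.2 ⟨_, hproj b hb, _, hb', add_sub_cancel _ _⟩

theorem exists_orthogonal_tripotents_iff_exists_signed_indicators :
    (∃ (k : ℕ) (v : Fin k → ι → ℝ), (∀ m, v m ≠ 0) ∧ (∀ m, v m * v m * v m = v m) ∧
      Pairwise (fun m n => v m * v n = 0) ∧ span ℝ (Set.range v) = A) ↔
    ∃ (k : ℕ) (S : Fin k → Finset ι) (ε : Fin k → ι → ℝ), (∀ m, (S m).Nonempty) ∧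
      Pairwise (fun m n => Disjoint (S m) (S n)) ∧ (∀ m, ∀ i ∈ S m, ε m i = 1 ∨ ε m i = -1) ∧
      span ℝ (Set.range fun m => Set.indicator (S m) (ε m)) = A := by
  constructor
  · rintro ⟨k, v, hv0, hv3, hvv, rfl⟩
    refine ⟨k, fun m => Finset.univ.filter fun i => v m i ≠ 0, v, fun m => ?_, ?_, ?_, ?_⟩
    · simpa [Finset.filter_nonempty_iff] using Function.ne_iff.1 (hv0 m)
    · intro m n hmn
      refine Finset.disjoint_left.2 fun i him hin => ?_
      simp only [Finset.mem_filter, Finset.mem_univ, true_and] at him hin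
      exact mul_ne_zero him hin (congrFun (hvv hmn) i)
    · intro m i hi
      simp only [Finset.mem_filter, Finset.mem_univ, true_and] at hi
      exact mul_self_eq_one_iff.1 (mul_right_cancel₀ hi (by simpa using congrFun (hv3 m) i))
    · congr 2
      funext m
      convert Set.indicator_support (f := v m)
      simp [Function.support]
  · rintro ⟨k, S, ε, hS, hdisj, hε, rfl⟩
    refine ⟨k, _, fun m => ?_, fun m => ?_, fun m n hmn => ?_, rfl⟩
    · obtain ⟨i, hi⟩ := hS m
      refine Function.ne_iff.2 ⟨i, ?_⟩
      rw [Set.indicator_of_mem hi]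
      rcases hε m i hi with h | h <;> simp [h]
    · funext j
      by_cases hj : j ∈ S m
      · rcases hε m j hj with h | h <;> simp [Set.indicator_of_mem hj, h]
      · simp [Set.indicator_of_notMem hj]
    · funext j
      by_cases hj : j ∈ S m
      · simp [Set.indicator_of_notMem (Finset.disjoint_left.1 (hdisj hmn) hj)]
      · simp [Set.indicator_of_notMem hj]

theorem mul_mul_le_self_iff_exists_signed_indicators :
    A * A * A ≤ A ↔
    ∃ (k : ℕ) (S : Fin k → Finset ι) (ε : Fin k → ι → ℝ), (∀ m, (S m).Nonempty) ∧
      Pairwise (fun m n => Disjoint (S m) (S n)) ∧ (∀ m, ∀ i ∈ S m, ε m i = 1 ∨ ε m i = -1) ∧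
      span ℝ (Set.range fun m => Set.indicator (S m) (ε m)) = A := by
  rw [← exists_orthogonal_tripotents_iff_exists_signed_indicators]
  refine ⟨exists_orthogonal_tripotents_span_eq, ?_⟩
  rintro ⟨k, v, -, hv3, hvv, rfl⟩
  exact span_mul_span_mul_span_le_of_pairwise_mul_eq_zero hv3 hvv

end TripleClosed

def IsLieTripleSystem {R L : Type*} [Semiring R] [AddCommMonoid L] [Module R L] [Bracket L L]
    (W : Submodule R L) : Prop :=
  ∀ u ∈ W, ∀ v ∈ W, ∀ w ∈ W, ⁅⁅u, v⁆, w⁆ ∈ W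

section ProductOfSl2

variable (r : ℕ)

noncomputable def sumH : (Fin r → ℝ) →ₗ[ℝ] slProd r :=
  LinearMap.pi fun i => (LinearMap.proj i).smulRight !![(0 : ℝ), 1; 1, 0]

noncomputable def sumY : (Fin r → ℝ) →ₗ[ℝ] slProd r :=
  LinearMap.pi fun i => (LinearMap.proj i).smulRight !![(1 : ℝ), 0; 0, -1]

noncomputable def sumHY : (Fin r → ℝ) × (Fin r → ℝ) →ₗ[ℝ] slProd r :=
  (sumH r).coprod (sumY r)

variable {r}

@[simp]
theorem sumH_apply (a : Fin r → ℝ) (i : Fin r) : sumH r a i = a i • !![(0 : ℝ), 1; 1, 0] := rfl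

@[simp]
theorem sumY_apply (a : Fin r → ℝ) (i : Fin r) : sumY r a i = a i • !![(1 : ℝ), 0; 0, -1] := rfl

theorem sumH_single (i : Fin r) : sumH r (Pi.single i 1) = Hvec r i := by
  funext j
  rcases eq_or_ne j i with rfl | hji <;> simp [Hvec, *]

theorem sumH_indicator (S : Finset (Fin r)) (ε : Fin r → ℝ) :
    sumH r (Set.indicator S ε) = ∑ i ∈ S, ε i • Hvec r i := by
  have h : Set.indicator S ε = ∑ i ∈ S, ε i • Pi.single i 1 := by
    funext j
    simp [Finset.sum_apply, Pi.single_apply, Set.indicator_apply]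
  simp [h, sumH_single]

theorem sumH_injective : Function.Injective (sumH r) := fun a b h =>
  funext fun i => by simpa using congrFun (congrFun (congrFun h i) 0) 1

theorem range_sumH : LinearMap.range (sumH r) = span ℝ (Set.range (Hvec r)) := by
  rw [LinearMap.range_eq_map, ← (Pi.basisFun ℝ (Fin r)).span_eq, map_span, ← Set.range_comp]
  congr 2
  funext i
  simp [sumH_single]

theorem Jmap_comp_sumH : Jmap r ∘ₗ sumH r = sumY r := by
  refine LinearMap.ext fun a => funext fun i => ?_
  change a i • !![(0 : ℝ), 1; 1, 0] * !![(0 : ℝ), -1; 1, 0] = a i • !![(1 : ℝ), 0; 0, -1]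
  rw [smul_mul_assoc]
  congr 1
  ext j k
  fin_cases j <;> fin_cases k <;> simp [Matrix.mul_apply]

theorem sumHY_injective : Function.Injective (sumHY r) := by
  rintro ⟨a, b⟩ ⟨c, d⟩ h
  have h01 := fun i => congrFun (congrFun (congrFun h i) 0) 1
  have h00 := fun i => congrFun (congrFun (congrFun h i) 0) 0
  simp [sumHY] at h01 h00
  exact Prod.ext (funext h01) (funext h00)

theorem lie_lie_sumHY (a b c d e f : Fin r → ℝ) :
    ⁅⁅sumHY r (a, b), sumHY r (c, d)⁆, sumHY r (e, f)⁆ =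
      sumHY r ((4 : ℝ) • ((a * d - b * c) * f), (-4 : ℝ) • ((a * d - b * c) * e)) := by
  funext i
  ext j k
  fin_cases j <;> fin_cases k <;>
    simp [sumHY, Ring.lie_def] <;> ring

theorem isLieTripleSystem_map_sumHY_iff (A : Submodule ℝ (Fin r → ℝ)) :
    IsLieTripleSystem ((A.prod A).map (sumHY r)) ↔ A * A * A ≤ A := by
  have hmem : ∀ x, sumHY r x ∈ (A.prod A).map (sumHY r) ↔ x.1 ∈ A ∧ x.2 ∈ A := fun x => by
    rw [← mem_comap, comap_map_eq_of_injective sumHY_injective, mem_prod]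
  constructor
  · refine fun h => mul_mul_le_iff.2 fun a ha b hb c hc => ?_
    have habc := h _ ((hmem (a, 0)).2 ⟨ha, zero_mem _⟩) _ ((hmem (0, b)).2 ⟨zero_mem _, hb⟩)
      _ ((hmem (c, 0)).2 ⟨hc, zero_mem _⟩)
    rw [lie_lie_sumHY, hmem] at habc
    simpa using A.smul_mem (-4)⁻¹ habc.2
  · intro hA
    have h3 : ∀ {x y z}, x ∈ A → y ∈ A → z ∈ A → x * y * z ∈ A := fun hx hy hz =>
      hA (mul_mem_mul (mul_mem_mul hx hy) hz)
    rintro _ ⟨⟨a, b⟩, ⟨ha, hb⟩, rfl⟩ _ ⟨⟨c, d⟩, ⟨hc, hd⟩, rfl⟩ _ ⟨⟨e, f⟩, ⟨he, hf⟩, rfl⟩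
    rw [lie_lie_sumHY, hmem, sub_mul, sub_mul]
    exact ⟨A.smul_mem _ (A.sub_mem (h3 ha hd hf) (h3 hb hc hf)),
      A.smul_mem _ (A.sub_mem (h3 ha hd he) (h3 hb hc he))⟩

end ProductOfSl2

theorem lieTripleSystem_iff_canonical_basis_general (r : ℕ)
    (𝔞' : Submodule ℝ (slProd r))
    (h𝔞' : 𝔞' ≤ Submodule.span ℝ (Set.range (Hvec r))) :
    (∀ u ∈ 𝔞' ⊔ 𝔞'.map (Jmap r), ∀ v ∈ 𝔞' ⊔ 𝔞'.map (Jmap r),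
      ∀ w ∈ 𝔞' ⊔ 𝔞'.map (Jmap r), ⁅⁅u, v⁆, w⁆ ∈ 𝔞' ⊔ 𝔞'.map (Jmap r))
    ↔ ∃ (k : ℕ) (V : Fin k → slProd r) (S : Fin k → Finset (Fin r))
        (ε : Fin k → Fin r → ℝ),
        (∀ m, (S m).Nonempty) ∧
        (∀ m n, m ≠ n → Disjoint (S m) (S n)) ∧
        (∀ m, ∀ i ∈ S m, ε m i = 1 ∨ ε m i = -1) ∧
        (∀ m, V m = ∑ i ∈ S m, ε m i • Hvec r i) ∧
        𝔞' = Submodule.span ℝ (Set.range V) := by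
  set A := 𝔞'.comap (sumH r)
  have h𝔞'A : 𝔞' = A.map (sumH r) := (map_comap_eq_of_le (h𝔞'.trans_eq (range_sumH).symm)).symm
  have hW : 𝔞' ⊔ 𝔞'.map (Jmap r) = (A.prod A).map (sumHY r) := by
    rw [sumHY, LinearMap.coprod_map_prod, ← Jmap_comp_sumH, map_comp, ← h𝔞'A]
  have hspan : ∀ {k} (w : Fin k → Fin r → ℝ),
      span ℝ (Set.range w) = A ↔ 𝔞' = span ℝ (Set.range (sumH r ∘ w)) := fun w => by
    rw [h𝔞'A, Set.range_comp, ← map_span, (map_injective_of_injective sumH_injective).eq_iff,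
      eq_comm]
  change IsLieTripleSystem _ ↔ _
  rw [hW, isLieTripleSystem_map_sumHY_iff, mul_mul_le_self_iff_exists_signed_indicators]
  constructor
  · rintro ⟨k, S, ε, hS, hdisj, hε, hA⟩
    exact ⟨k, _, S, ε, hS, fun m n h => hdisj h, hε, fun m => sumH_indicator _ _, (hspan _).1 hA⟩
  · rintro ⟨k, V, S, ε, hS, hdisj, hε, hV, h⟩
    refine ⟨k, S, ε, hS, fun m n h => hdisj m n h, hε, (hspan _).2 ?_⟩
    convert h using 4
    funext m
    simp [hV, sumH_indicator]

/-- Let `𝔞' ⊆ 𝔞 = span {H_1, …, H_r}` be a linear subspace and `W = 𝔞' + J(𝔞')`.  Then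
`W` is a Lie triple system of `g = ∏ sl(2,ℝ)` iff `𝔞'` is spanned by vectors
`V_m = Σ_{i ∈ S_m} ε_{m,i} H_i` with `ε_{m,i} ∈ {1,-1}` and nonempty pairwise disjoint
index sets `S_m`. -/
theorem lieTripleSystem_iff_canonical_basis (r : ℕ) (hr : 1 ≤ r)
    (𝔞' : Submodule ℝ (slProd r))
    (h𝔞' : 𝔞' ≤ Submodule.span ℝ (Set.range (Hvec r))) :
    (∀ u ∈ 𝔞' ⊔ 𝔞'.map (Jmap r), ∀ v ∈ 𝔞' ⊔ 𝔞'.map (Jmap r),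
      ∀ w ∈ 𝔞' ⊔ 𝔞'.map (Jmap r), ⁅⁅u, v⁆, w⁆ ∈ 𝔞' ⊔ 𝔞'.map (Jmap r))
    ↔ ∃ (k : ℕ) (V : Fin k → slProd r) (S : Fin k → Finset (Fin r))
        (ε : Fin k → Fin r → ℝ),
        (∀ m, (S m).Nonempty) ∧
        (∀ m n, m ≠ n → Disjoint (S m) (S n)) ∧
        (∀ m, ∀ i ∈ S m, ε m i = 1 ∨ ε m i = -1) ∧
        (∀ m, V m = ∑ i ∈ S m, ε m i • Hvec r i) ∧
        𝔞' = Submodule.span ℝ (Set.range V) :=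
  lieTripleSystem_iff_canonical_basis_general r 𝔞' h𝔞'
end

section
/- Let r ≥ 1 and let g = ∏_{i=1}^r sl(2,ℝ) be the product real Lie algebra of r copies of the Lie algebra of traceless real 2×2 matrices, with componentwise bracket. For each i, let H_i ∈ g be the element whose i-th component is the matrix ((0,1),(1,0)) and whose other components are 0, and let Y_i ∈ g be the element whose i-th component is ((1,0),(0,−1)) and whose other components are 0. Let 𝔞 ⊆ g be the real span of H_1,…,H_r, and for V = Σ_i c_i H_i ∈ 𝔞 write JV := Σ_i c_i Y_i. Then a family of vectors Ṽ_1,…,Ṽ_k ∈ 𝔞 satisfies the bracket relations ⁅⁅Ṽ_m, JṼ_m⁆, JṼ_m⁆ = 4·Ṽ_m and ⁅⁅Ṽ_m, JṼ_m⁆, Ṽ_m⁆ = −4·JṼ_m for every m, together with ⁅⁅Ṽ_m, JṼ_n⁆, JṼ_l⁆ = 0 and ⁅⁅Ṽ_m, JṼ_n⁆, Ṽ_l⁆ = 0 whenever m, n, l are not all equal, if and only if each Ṽ_m has the form Ṽ_m = Σ_{i ∈ S_m} ε_{m,i} H_i with ε_{m,i} ∈ {1,−1} and the (possibly empty) supports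 S_m ⊆ {1,…,r} pairwise disjoint. -/
/-! Write `V_m = Σ_i c_{m,i} H_i`. Componentwise `⁅⁅a H, b Y⁆, d Y⁆ = 4abd H` and
`⁅⁅a H, b Y⁆, d H⁆ = -4abd Y`, so in the ring `ℝ^r` of coefficient vectors the bracket relations
say exactly that `c_m³ = c_m` and that `c_m c_n c_l = 0` whenever `m, n, l` are not all equal.
Since `ℝ^r` is reduced, the latter is equivalent to `c_m c_n = 0` for `m ≠ n`, i.e. to disjoint
supports, while `c³ = c` says that every coefficient is `0` or `±1`. -/

local notation "𝐇" => !![(0 : ℝ), 1; 1, 0]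
local notation "𝐘" => !![(1 : ℝ), 0; 0, -1]

theorem cube_eq_self_iff {R : Type*} [Ring R] [NoZeroDivisors R] {x : R} :
    x * x * x = x ↔ x = 0 ∨ x = 1 ∨ x = -1 := by
  rw [← mul_self_eq_one_iff]
  by_cases hx : x = 0 <;> simp [mul_assoc, hx]

theorem triple_products_eq_zero_iff {ι M : Type*} [CommMonoidWithZero M] [IsReduced M]
    (x : ι → M) :
    (∀ m n l, ¬(m = n ∧ n = l) → x m * x n * x l = 0) ↔ ∀ m n, m ≠ n → x m * x n = 0 := by
  constructor
  · intro h m n hmn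
    have hsq : (x m * x n) ^ 2 = 0 :=
      calc (x m * x n) ^ 2 = x m * (x m * x n * x n) := by rw [sq]; ac_rfl
        _ = 0 := by rw [h m n n (by tauto), mul_zero]
    exact IsReduced.eq_zero _ ⟨2, hsq⟩
  · intro h m n l hmnl
    by_cases hmn : m = n
    · subst hmn
      rw [mul_assoc, h m l fun hml => hmnl ⟨rfl, hml⟩, mul_zero]
    · rw [h m n hmn, zero_mul]

theorem cube_eq_self_and_pairwise_mul_eq_zero_iff {ι κ R : Type*} [Fintype κ] [DecidableEq κ]
    [Ring R] [NoZeroDivisors R] (c : ι → κ → R) :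
    ((∀ m, c m * c m * c m = c m) ∧ ∀ m n, m ≠ n → c m * c n = 0) ↔
      ∃ (S : ι → Finset κ) (ε : ι → κ → R),
        (∀ m n, m ≠ n → Disjoint (S m) (S n)) ∧
        (∀ m, ∀ i ∈ S m, ε m i = 1 ∨ ε m i = -1) ∧
        ∀ m, c m = fun i => if i ∈ S m then ε m i else 0 := by
  classical
  constructor
  · rintro ⟨hcube, horth⟩
    refine ⟨fun m => {i | c m i ≠ 0}, c, fun m n hmn => ?_, fun m i hi => ?_, fun m => ?_⟩
    · exact Finset.disjoint_filter.2 fun i _ hm hn =>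
        mul_ne_zero hm hn (congrFun (horth m n hmn) i)
    · exact (cube_eq_self_iff.1 (congrFun (hcube m) i)).resolve_left (Finset.mem_filter.1 hi).2
    · ext i
      by_cases hi : c m i = 0 <;> simp [hi]
  · rintro ⟨S, ε, hdisj, hsign, hc⟩
    obtain rfl : c = fun m i => if i ∈ S m then ε m i else 0 := funext hc
    refine ⟨fun m => funext fun i => ?_, fun m n hmn => funext fun i => ?_⟩
    · by_cases hi : i ∈ S m
      · rcases hsign m i hi with h | h <;> simp [hi, h]
      · simp [hi]
    · by_cases hi : i ∈ S m
      · simp [hi, Finset.disjoint_left.1 (hdisj m n hmn) hi]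
      · simp [hi]

theorem lie_lie_smul_H_smul_Y_smul_Y (a b d : ℝ) :
    ⁅⁅a • 𝐇, b • 𝐘⁆, d • 𝐘⁆ = (4 * (a * b * d)) • 𝐇 := by
  ext i j
  fin_cases i <;> fin_cases j <;> simp [Ring.lie_def] <;> ring

theorem lie_lie_smul_H_smul_Y_smul_H (a b d : ℝ) :
    ⁅⁅a • 𝐇, b • 𝐘⁆, d • 𝐇⁆ = -((4 * (a * b * d)) • 𝐘) := by
  ext i j
  fin_cases i <;> fin_cases j <;> simp [Ring.lie_def] <;> ring

theorem Jmap_apply {r : ℕ} (X : slProd r) (j : Fin r) :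
    Jmap r X j = X j * !![(0 : ℝ), -1; 1, 0] := rfl

theorem Jmap_Jmap {r : ℕ} (X : slProd r) : Jmap r (Jmap r X) = -X := by
  ext j : 1
  rw [Jmap_apply, Jmap_apply, mul_assoc, Pi.neg_apply, ← mul_neg_one (X j)]
  congr 1
  ext i k
  fin_cases i <;> fin_cases k <;> simp

theorem Jmap_injective (r : ℕ) : Function.Injective (Jmap r) := fun X Y h => by
  simpa [Jmap_Jmap] using congrArg (Jmap r) h

theorem linearCombination_Hvec_apply {r : ℕ} (a : Fin r → ℝ) (j : Fin r) :
    Fintype.linearCombination ℝ (Hvec r) a j = a j • 𝐇 := by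
  simp [Fintype.linearCombination_apply, Hvec, Pi.single_apply]

theorem Jmap_linearCombination_Hvec_apply {r : ℕ} (a : Fin r → ℝ) (j : Fin r) :
    Jmap r (Fintype.linearCombination ℝ (Hvec r) a) j = a j • 𝐘 := by
  rw [Jmap_apply, linearCombination_Hvec_apply, smul_mul_assoc]
  congr 1
  ext i k
  fin_cases i <;> fin_cases k <;> simp

theorem Fintype.linearCombination_ite_mem {α R M : Type*} [Fintype α] [DecidableEq α]
    [Semiring R] [AddCommMonoid M] [Module R M] (v : α → M) (s : Finset α) (f : α → R) :
    Fintype.linearCombination R v (fun i => if i ∈ s then f i else 0) = ∑ i ∈ s, f i • v i := by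
  simp [Fintype.linearCombination_apply, ite_smul]

theorem linearIndependent_Hvec (r : ℕ) : LinearIndependent ℝ (Hvec r) := by
  rw [linearIndependent_iff_injective_fintypeLinearCombination]
  intro a b h
  ext j
  simpa [linearCombination_Hvec_apply] using congrArg (fun X : slProd r => X j 0 1) h

theorem lie_lie_Jmap_Jmap_linearCombination_Hvec {r : ℕ} (a b d : Fin r → ℝ) :
    ⁅⁅Fintype.linearCombination ℝ (Hvec r) a, Jmap r (Fintype.linearCombination ℝ (Hvec r) b)⁆,
        Jmap r (Fintype.linearCombination ℝ (Hvec r) d)⁆ =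
      (4 : ℝ) • Fintype.linearCombination ℝ (Hvec r) (a * b * d) := by
  ext j : 1
  simp only [LieRing.lie_apply, Pi.smul_apply, Pi.mul_apply, linearCombination_Hvec_apply,
    Jmap_linearCombination_Hvec_apply, lie_lie_smul_H_smul_Y_smul_Y, smul_smul]

theorem lie_lie_Jmap_linearCombination_Hvec {r : ℕ} (a b d : Fin r → ℝ) :
    ⁅⁅Fintype.linearCombination ℝ (Hvec r) a, Jmap r (Fintype.linearCombination ℝ (Hvec r) b)⁆,
        Fintype.linearCombination ℝ (Hvec r) d⁆ =
      -((4 : ℝ) • Jmap r (Fintype.linearCombination ℝ (Hvec r) (a * b * d))) := by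
  ext j : 1
  simp only [LieRing.lie_apply, Pi.neg_apply, Pi.smul_apply, Pi.mul_apply,
    linearCombination_Hvec_apply, Jmap_linearCombination_Hvec_apply,
    lie_lie_smul_H_smul_Y_smul_H, smul_smul]

def BracketRelations {ι : Type*} (r : ℕ) (V : ι → slProd r) : Prop :=
  (∀ m, ⁅⁅V m, Jmap r (V m)⁆, Jmap r (V m)⁆ = (4 : ℝ) • V m ∧
      ⁅⁅V m, Jmap r (V m)⁆, V m⁆ = -((4 : ℝ) • Jmap r (V m))) ∧
    ∀ m n l, ¬(m = n ∧ n = l) →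
      ⁅⁅V m, Jmap r (V n)⁆, Jmap r (V l)⁆ = 0 ∧ ⁅⁅V m, Jmap r (V n)⁆, V l⁆ = 0

theorem bracketRelations_linearCombination_Hvec_iff {ι : Type*} {r : ℕ} (c : ι → Fin r → ℝ) :
    BracketRelations r (fun m => Fintype.linearCombination ℝ (Hvec r) (c m)) ↔
      (∀ m, c m * c m * c m = c m) ∧
        ∀ m n l, ¬(m = n ∧ n = l) → c m * c n * c l = 0 := by
  have hinj := (linearIndependent_Hvec r).fintypeLinearCombination_injective
  simp only [BracketRelations, lie_lie_Jmap_Jmap_linearCombination_Hvec,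
    lie_lie_Jmap_linearCombination_Hvec, neg_inj, neg_eq_zero, smul_right_inj (four_ne_zero' ℝ),
    smul_eq_zero, four_ne_zero, false_or, (Jmap_injective r).eq_iff, map_eq_zero_iff _ hinj,
    map_eq_zero_iff _ (Jmap_injective r), hinj.eq_iff, and_self]

/-- A family `Ṽ_1, …, Ṽ_k` of vectors of `𝔞 = span {H_1, …, H_r}` satisfies the bracket
relations `⁅⁅Ṽ_m, JṼ_m⁆, JṼ_m⁆ = 4 Ṽ_m`, `⁅⁅Ṽ_m, JṼ_m⁆, Ṽ_m⁆ = -4 JṼ_m` and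
`⁅⁅Ṽ_m, JṼ_n⁆, JṼ_l⁆ = ⁅⁅Ṽ_m, JṼ_n⁆, Ṽ_l⁆ = 0` for `m, n, l` not all equal, iff each
`Ṽ_m` has the form `Σ_{i ∈ S_m} ε_{m,i} H_i` with `ε_{m,i} ∈ {1,-1}` and the (possibly
empty) supports `S_m` pairwise disjoint. -/
theorem bracket_relations_iff_signed_orthogonal (r k : ℕ) (V : Fin k → slProd r)
    (hV : ∀ m, V m ∈ Submodule.span ℝ (Set.range (Hvec r))) :
    ((∀ m, ⁅⁅V m, Jmap r (V m)⁆, Jmap r (V m)⁆ = (4 : ℝ) • V m ∧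
        ⁅⁅V m, Jmap r (V m)⁆, V m⁆ = -((4 : ℝ) • Jmap r (V m))) ∧
      (∀ m n l, ¬(m = n ∧ n = l) →
        ⁅⁅V m, Jmap r (V n)⁆, Jmap r (V l)⁆ = 0 ∧ ⁅⁅V m, Jmap r (V n)⁆, V l⁆ = 0))
    ↔ ∃ (S : Fin k → Finset (Fin r)) (ε : Fin k → Fin r → ℝ),
        (∀ m n, m ≠ n → Disjoint (S m) (S n)) ∧
        (∀ m, ∀ i ∈ S m, ε m i = 1 ∨ ε m i = -1) ∧
        (∀ m, V m = ∑ i ∈ S m, ε m i • Hvec r i) := by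
  simp_rw [← Fintype.range_linearCombination, LinearMap.mem_range] at hV
  choose c hc using hV
  obtain rfl : (fun m => Fintype.linearCombination ℝ (Hvec r) (c m)) = V := funext hc
  change BracketRelations r _ ↔ _
  rw [bracketRelations_linearCombination_Hvec_iff, triple_products_eq_zero_iff,
    cube_eq_self_and_pairwise_mul_eq_zero_iff]
  simp only [← Fintype.linearCombination_ite_mem,
    (linearIndependent_Hvec r).fintypeLinearCombination_injective.eq_iff]
end

section
/- Let η : ℝ → ℝ be continuous with η(0) = 0, differentiable on (0,∞), and suppose that η'(x)·sinh(x)·cosh(x) = η(x) for all x > 0. Then there exists c ∈ ℝ such that η(x) = c·tanh(x) for all x ≥ 0. -/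
/-! On `(0, ∞)` the equation says exactly that `η / tanh = η cosh / sinh` has derivative
`(η' sinh cosh - η) / sinh² = 0`, so this quotient is a constant `c` there; at `0` both sides
vanish. -/

open Real Set

lemma hasDerivAt_mul_cosh_div_sinh {f : ℝ → ℝ} {f' x : ℝ} (hf : HasDerivAt f f' x)
    (hx : sinh x ≠ 0) :
    HasDerivAt (fun y => f y * cosh y / sinh y) ((f' * sinh x * cosh x - f x) / sinh x ^ 2) x := by
  refine ((hf.mul (hasDerivAt_cosh x)).div (hasDerivAt_sinh x) hx).congr_deriv ?_
  simp only [Pi.mul_apply]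
  field_simp
  linear_combination -f x * cosh_sq_sub_sinh_sq x

lemma exists_mul_cosh_div_sinh_eq_of_ode {η : ℝ → ℝ}
    (hdiff : ∀ x : ℝ, 0 < x → DifferentiableAt ℝ η x)
    (hode : ∀ x : ℝ, 0 < x → deriv η x * sinh x * cosh x = η x) :
    ∃ c : ℝ, ∀ x : ℝ, 0 < x → η x * cosh x / sinh x = c := by
  have hderiv : ∀ x ∈ Ioi (0 : ℝ), HasDerivAt (fun y => η y * cosh y / sinh y) 0 x := by
    intro x hx
    simpa [hode x hx] using
      hasDerivAt_mul_cosh_div_sinh (hdiff x hx).hasDerivAt (sinh_pos_iff.2 hx).ne'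
  exact isOpen_Ioi.exists_is_const_of_deriv_eq_zero isPreconnected_Ioi
    (fun x hx => (hderiv x hx).differentiableAt.differentiableWithinAt)
    (fun x hx => (hderiv x hx).deriv)

theorem eq_const_mul_tanh_of_ode_general (η : ℝ → ℝ) (h0 : η 0 = 0)
    (hdiff : ∀ x : ℝ, 0 < x → DifferentiableAt ℝ η x)
    (hode : ∀ x : ℝ, 0 < x → deriv η x * Real.sinh x * Real.cosh x = η x) :
    ∃ c : ℝ, ∀ x : ℝ, 0 ≤ x → η x = c * Real.tanh x := by
  obtain ⟨c, hc⟩ := exists_mul_cosh_div_sinh_eq_of_ode hdiff hode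
  refine ⟨c, fun x hx => ?_⟩
  rcases hx.eq_or_lt with rfl | hx
  · simp [h0]
  · rw [← hc x hx, tanh_eq_sinh_div_cosh]
    field_simp [(sinh_pos_iff.2 hx).ne', (cosh_pos x).ne']

/-- If `η : ℝ → ℝ` is continuous with `η 0 = 0`, differentiable on `(0, ∞)`, and
satisfies `η'(x) · sinh x · cosh x = η x` for all `x > 0`, then `η` is a constant
multiple of `tanh` on `[0, ∞)`. -/
theorem eq_const_mul_tanh_of_ode (η : ℝ → ℝ) (hcont : Continuous η) (h0 : η 0 = 0)
    (hdiff : ∀ x : ℝ, 0 < x → DifferentiableAt ℝ η x)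
    (hode : ∀ x : ℝ, 0 < x → deriv η x * Real.sinh x * Real.cosh x = η x) :
    ∃ c : ℝ, ∀ x : ℝ, 0 ≤ x → η x = c * Real.tanh x :=
  eq_const_mul_tanh_of_ode_general η h0 hdiff hode
end

section
/- Let η : ℝ → ℝ be an odd function, and define F on the open unit disc D = {w ∈ ℂ : |w| < 1} by F(0) = 0 and F(w) = η(artanh|w|)·w/|w| for w ≠ 0, where artanh is the inverse hyperbolic tangent. Then F is complex differentiable at every point of D if and only if there exists c ∈ ℝ such that η(x) = c·tanh(x) for all x ∈ ℝ. -/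
/-!
On the punctured disc, `F w / w = φ ‖w‖ / ‖w‖` is real. If `F` is holomorphic, this real-valued
holomorphic function is constant by the open mapping theorem, so `φ t = c t`; conversely `φ t = c t`
makes `F` the linear map `w ↦ c w`. For `φ = η ∘ artanh` the substitution `t = tanh x` turns
`φ t = c t` into `η x = c tanh x` for `x > 0`, and oddness of both sides covers `x ≤ 0`.
-/

noncomputable def Real.artanh' (x : ℝ) : ℝ := Real.log ((1 + x) / (1 - x)) / 2

open Set Metric

namespace Real

lemma artanh'_eq_artanh {x : ℝ} (hx : x ∈ Icc (-1) 1) : artanh' x = artanh x := by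
  rw [artanh', artanh_eq_half_log hx]
  ring

lemma artanh'_tanh (x : ℝ) : artanh' (tanh x) = x := by
  rw [artanh'_eq_artanh ⟨(neg_one_lt_tanh x).le, (tanh_lt_one x).le⟩, artanh_tanh]

lemma tanh_artanh' {x : ℝ} (hx : x ∈ Ioo (-1) 1) : tanh (artanh' x) = x := by
  rw [artanh'_eq_artanh (Ioo_subset_Icc_self hx), tanh_artanh hx]

lemma tanh_pos {x : ℝ} (hx : 0 < x) : 0 < tanh x := by
  rw [tanh_eq_sinh_div_cosh]
  exact div_pos (sinh_pos_iff.2 hx) (cosh_pos x)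

end Real

lemma Function.Odd.eq_of_eqOn_Ioi {α β : Type*} [AddCommGroup α] [LinearOrder α]
    [IsOrderedAddMonoid α] [AddCommGroup β] [IsAddTorsionFree β] {f g : α → β}
    (hf : f.Odd) (hg : g.Odd) (h : EqOn f g (Ioi 0)) : f = g := by
  funext x
  rcases lt_trichotomy x 0 with hx | rfl | hx
  · rw [← neg_neg x, hf, hg, h (neg_pos.2 hx)]
  · rw [hf.map_zero, hg.map_zero]
  · exact h hx

def HasRadialProfile (F : ℂ → ℂ) (φ : ℝ → ℝ) : Prop :=
  ∀ w : ℂ, w ≠ 0 → ‖w‖ < 1 → F w = (φ ‖w‖ : ℂ) * w / ((‖w‖ : ℝ) : ℂ)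

namespace HasRadialProfile

variable {F : ℂ → ℂ} {φ : ℝ → ℝ}

lemma div_self_eq (hF : HasRadialProfile F φ) {w : ℂ} (hw₀ : w ≠ 0) (hw₁ : ‖w‖ < 1) :
    F w / w = ((φ ‖w‖ / ‖w‖ : ℝ) : ℂ) := by
  have : ((‖w‖ : ℝ) : ℂ) ≠ 0 := by exact_mod_cast norm_ne_zero_iff.2 hw₀
  rw [hF w hw₀ hw₁]
  push_cast
  field_simp

lemma exists_eq_mul_of_differentiableAt (hF : HasRadialProfile F φ)
    (hdiff : ∀ w : ℂ, ‖w‖ < 1 → DifferentiableAt ℂ F w) :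
    ∃ c : ℝ, ∀ t ∈ Ioo (0 : ℝ) 1, φ t = c * t := by
  -- a convex (hence connected) domain avoiding `0` and containing the radius `(0, 1)`
  set U : Set ℂ := ball 0 1 ∩ {z | 0 < z.re}
  have hUo : IsOpen U := isOpen_ball.inter (isOpen_lt continuous_const Complex.continuous_re)
  have hmem : ∀ t ∈ Ioo (0 : ℝ) 1, (t : ℂ) ∈ U ∧ ‖(t : ℂ)‖ = t := fun t ht => by
    have hnorm : ‖(t : ℂ)‖ = t := by rw [Complex.norm_real, Real.norm_of_nonneg ht.1.le]
    exact ⟨⟨by rw [mem_ball_zero_iff, hnorm]; exact ht.2, by simpa using ht.1⟩, hnorm⟩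
  have hUc : IsConnected U :=
    ((convex_ball 0 1).inter (convex_halfSpace_re_gt 0)).isConnected
      ⟨_, (hmem (1 / 2) ⟨by norm_num, by norm_num⟩).1⟩
  have hne : ∀ w ∈ U, w ≠ 0 := fun w hw h => by simpa [h] using hw.2
  have hnorm : ∀ w ∈ U, ‖w‖ < 1 := fun w hw => mem_ball_zero_iff.1 hw.1
  have han : AnalyticOnNhd ℂ (fun w => F w / w) U :=
    DifferentiableOn.analyticOnNhd (fun w hw =>
      ((hdiff w (hnorm w hw)).div differentiableAt_id (hne w hw)).differentiableWithinAt) hUo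
  have him : ∀ w ∈ U, (F w / w).im = 0 := fun w hw => by
    rw [hF.div_self_eq (hne w hw) (hnorm w hw), Complex.ofReal_im]
  obtain ⟨k, hk⟩ := han.eq_const_of_im_eq_const him hUo hUc
  refine ⟨k.re, fun t ht => ?_⟩
  obtain ⟨htU, htnorm⟩ := hmem t ht
  have := congrArg Complex.re (hk t htU)
  rw [hF.div_self_eq (hne t htU) (hnorm t htU), htnorm, Complex.ofReal_re] at this
  rw [← this, div_mul_cancel₀ _ ht.1.ne']

lemma eqOn_mul (hF : HasRadialProfile F φ) (hF₀ : F 0 = 0) {c : ℝ}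
    (hc : ∀ t ∈ Ioo (0 : ℝ) 1, φ t = c * t) : EqOn F (fun z => c * z) (ball 0 1) := by
  intro w hw
  rw [mem_ball_zero_iff] at hw
  rcases eq_or_ne w 0 with rfl | hw₀
  · simp [hF₀]
  have hpos : 0 < ‖w‖ := norm_pos_iff.2 hw₀
  have : ((‖w‖ : ℝ) : ℂ) ≠ 0 := by exact_mod_cast hpos.ne'
  rw [hF w hw₀ hw, hc _ ⟨hpos, hw⟩]
  push_cast
  field_simp

lemma differentiableAt_iff (hF : HasRadialProfile F φ) (hF₀ : F 0 = 0) :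
    (∀ w : ℂ, ‖w‖ < 1 → DifferentiableAt ℂ F w) ↔ ∃ c : ℝ, ∀ t ∈ Ioo (0 : ℝ) 1, φ t = c * t := by
  refine ⟨hF.exists_eq_mul_of_differentiableAt, fun ⟨c, hc⟩ w hw => ?_⟩
  have hw' : ball (0 : ℂ) 1 ∈ nhds w := isOpen_ball.mem_nhds (mem_ball_zero_iff.2 hw)
  exact ((differentiable_id.const_mul (c : ℂ)) w).congr_of_eventuallyEq
    ((hF.eqOn_mul hF₀ hc).eventuallyEq_of_mem hw')

end HasRadialProfile

lemma exists_comp_artanh'_eq_mul_iff_eq_mul_tanh {η : ℝ → ℝ} (hη : η.Odd) :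
    (∃ c : ℝ, ∀ t ∈ Ioo (0 : ℝ) 1, η (Real.artanh' t) = c * t) ↔
      ∃ c : ℝ, ∀ x : ℝ, η x = c * Real.tanh x := by
  refine exists_congr fun c => ⟨fun h x => ?_, fun h t ht => ?_⟩
  · have htanh : Function.Odd fun x => c * Real.tanh x := fun x => by
      simp only [Real.tanh_neg, mul_neg]
    refine congrFun (hη.eq_of_eqOn_Ioi htanh fun x (hx : 0 < x) => ?_) x
    have := h _ ⟨Real.tanh_pos hx, Real.tanh_lt_one x⟩
    rwa [Real.artanh'_tanh] at this
  · rw [h, Real.tanh_artanh' ⟨by linarith [ht.1], ht.2⟩]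

/-- Let `η : ℝ → ℝ` be odd and let `F` be defined on the open unit disc by `F 0 = 0` and
`F w = η (artanh |w|) · w / |w|` for `w ≠ 0`.  Then `F` is complex differentiable at
every point of the disc iff `η = c · tanh` for some real constant `c`. -/
theorem radial_map_holomorphic_iff_tanh (η : ℝ → ℝ) (hodd : ∀ x : ℝ, η (-x) = -η x)
    (F : ℂ → ℂ) (hF0 : F 0 = 0)
    (hF : ∀ w : ℂ, w ≠ 0 → ‖w‖ < 1 →
      F w = (η (Real.artanh' ‖w‖) : ℂ) * w / ((‖w‖ : ℝ) : ℂ)) :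
    (∀ w : ℂ, ‖w‖ < 1 → DifferentiableAt ℂ F w) ↔
      ∃ c : ℝ, ∀ x : ℝ, η x = c * Real.tanh x :=
  (HasRadialProfile.differentiableAt_iff (φ := fun t => η (Real.artanh' t)) hF hF0).trans
    (exists_comp_artanh'_eq_mul_iff_eq_mul_tanh hodd)
end

section
/- Define f on the open unit disc by f(w) = w / √(1 − |w|²) for w ∈ ℂ with |w| < 1. Then for every w with |w| < 1, f is real differentiable at w and the determinant of its Fréchet derivative at w, viewed as an ℝ-linear endomorphism of ℂ ≅ ℝ², equals (1 − |w|²)^{−2}. -/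
/-!
The map is radial, `f z = ψ (‖z‖²) • z` with `ψ t = (1 - t)^(-1/2)`, so its derivative at `w` is
the rank-one perturbation `ψ(‖w‖²) • id + (2 ψ'(‖w‖²) ⟪w, ·⟫) ⊗ w` of a homothety. By the matrix
determinant lemma its determinant in real dimension `n` is `ψ^n (1 + 2 ‖w‖² ψ' / ψ)`; for `n = 2`
and `ψ' = ψ³ / 2` this is `ψ⁴ (1 - ‖w‖² + ‖w‖²) = (1 - ‖w‖²)⁻²`.
-/

open Module
open scoped RealInnerProductSpace

theorem LinearMap.det_id_add_smulRight {R M : Type*} [CommRing R] [AddCommGroup M] [Module R M]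
    [Module.Free R M] [Module.Finite R M] (f : M →ₗ[R] R) (x : M) :
    LinearMap.det (LinearMap.id + f.smulRight x) = 1 + f x := by
  let b := Module.Free.chooseBasis R M
  rw [← LinearMap.det_toMatrix b, map_add, LinearMap.toMatrix_id, LinearMap.toMatrix_smulRight,
    Matrix.vecMulVec_eq Unit, Matrix.det_one_add_replicateCol_mul_replicateRow]
  have hfx := congrArg f (b.sum_repr x)
  simp only [map_sum, map_smul, smul_eq_mul] at hfx
  simp [dotProduct, mul_comm, hfx]

theorem LinearMap.det_smul_id_add_smulRight {K V : Type*} [Field K] [AddCommGroup V]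
    [Module K V] [FiniteDimensional K V] {c : K} (hc : c ≠ 0) (f : V →ₗ[K] K) (x : V) :
    LinearMap.det (c • LinearMap.id + f.smulRight x) = c ^ finrank K V * (1 + f x / c) := by
  have hfactor : c • LinearMap.id + f.smulRight x = c • (LinearMap.id + (c⁻¹ • f).smulRight x) := by
    ext v; simp [smul_smul, hc]
  rw [hfactor, LinearMap.det_smul, LinearMap.det_id_add_smulRight]
  simp [div_eq_inv_mul]

section Radial

variable {E : Type*} [NormedAddCommGroup E] [InnerProductSpace ℝ E] {ψ : ℝ → ℝ} {ψ' : ℝ} {w : E}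

theorem hasFDerivAt_radial (hψ : HasDerivAt ψ ψ' (‖w‖ ^ 2)) :
    HasFDerivAt (fun z : E => ψ (‖z‖ ^ 2) • z)
      (ψ (‖w‖ ^ 2) • ContinuousLinearMap.id ℝ E + (ψ' • 2 • innerSL ℝ w).smulRight w) w :=
  (hψ.comp_hasFDerivAt w (hasStrictFDerivAt_norm_sq w).hasFDerivAt).smul (hasFDerivAt_id w)

theorem det_fderiv_radial [FiniteDimensional ℝ E] (hψ : HasDerivAt ψ ψ' (‖w‖ ^ 2))
    (hψ0 : ψ (‖w‖ ^ 2) ≠ 0) :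
    (fderiv ℝ (fun z : E => ψ (‖z‖ ^ 2) • z) w).det =
      ψ (‖w‖ ^ 2) ^ finrank ℝ E * (1 + 2 * ‖w‖ ^ 2 * ψ' / ψ (‖w‖ ^ 2)) := by
  rw [(hasFDerivAt_radial hψ).fderiv, ContinuousLinearMap.det]
  refine (LinearMap.det_smul_id_add_smulRight hψ0
    (ψ' • 2 • innerSL ℝ w : E →L[ℝ] ℝ).toLinearMap w).trans ?_
  congr 3
  show (ψ' • 2 • innerSL ℝ w) w = _
  simp only [smul_apply, coe_innerSL_apply, real_inner_self_eq_norm_sq,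
    nsmul_eq_mul, Nat.cast_ofNat, smul_eq_mul]
  ring

end Radial

theorem hasDerivAt_inv_sqrt_one_sub {t : ℝ} (ht : t < 1) :
    HasDerivAt (fun t => (√(1 - t))⁻¹) ((√(1 - t))⁻¹ ^ 3 / 2) t := by
  have hpos : 0 < √(1 - t) := Real.sqrt_pos.mpr (by linarith)
  refine (((hasDerivAt_id' t).const_sub 1).sqrt (by linarith)).fun_inv hpos.ne' |>.congr_deriv ?_
  field_simp

/-- The map `f w = w / √(1 - |w|²)` of the open unit disc is real differentiable at
every point `w` of the disc, and the determinant of its Fréchet derivative at `w`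
(an `ℝ`-linear endomorphism of `ℂ ≅ ℝ²`) equals `(1 - |w|²)⁻²`. -/
theorem symplectic_duality_disc_jacobian (w : ℂ) (hw : ‖w‖ < 1) :
    DifferentiableAt ℝ
        (fun z : ℂ => z / (Real.sqrt (1 - ‖z‖ ^ 2) : ℂ)) w ∧
      (fderiv ℝ (fun z : ℂ => z / (Real.sqrt (1 - ‖z‖ ^ 2) : ℂ)) w).det =
        (1 - ‖w‖ ^ 2) ^ (-2 : ℤ) := by
  have hradial : (fun z : ℂ => z / (Real.sqrt (1 - ‖z‖ ^ 2) : ℂ)) =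
      fun z => (√(1 - ‖z‖ ^ 2))⁻¹ • z := by
    ext1 z; rw [Complex.real_smul, Complex.ofReal_inv, div_eq_inv_mul]
  have ht : ‖w‖ ^ 2 < 1 := by nlinarith [norm_nonneg w]
  have hψ := hasDerivAt_inv_sqrt_one_sub ht
  have hs : 0 < √(1 - ‖w‖ ^ 2) := Real.sqrt_pos.mpr (by linarith)
  rw [hradial]
  refine ⟨(hasFDerivAt_radial hψ).differentiableAt, ?_⟩
  rw [det_fderiv_radial hψ (inv_ne_zero hs.ne'), Complex.finrank_real_complex]
  have hsq := Real.sq_sqrt (sub_nonneg.mpr ht.le)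
  generalize √(1 - ‖w‖ ^ 2) = s at hs hsq ⊢
  rw [zpow_neg, ← hsq]
  field_simp
  linarith
end
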